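/- Let n be the cardinality of D, let p* be the uniform prior p* θ = 1/n, and let the player's mixed strategy be: choose the initial door X uniformly at random and always switch. Then this pair is a saddle point of the zero-sum game: for every strategy (x, a) and every transition probabilities q, ExpWin(x, a, p*, q) ≤ (n - 1)/n, and for every prior p and every transition probabilities q, (1/n) * ∑_{x ∈ D} ExpWin(x, switch, p, q) = (n - 1)/n ≥ (n - 1)/n; hence the value of the game is (n - 1)/n. -/

import Mathlib

open Finset

/-- `p` is a prior on the doors. -/
def IsPrior {D : Type*} [Fintype D] (p : D → ℝ) : Prop :=
  (∀ θ, 0 ≤ p θ) ∧ ∑ θ, p θ = 1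

/-- `q` are transition probabilities for the revealed door. -/
def IsTransKernel {D : Type*} [Fintype D] (q : D → D → ℝ) : Prop :=
  (∀ θ y, 0 ≤ q θ y) ∧ (∀ θ, q θ θ = 0) ∧ (∀ θ, ∑ y, q θ y = 1)

/-- Expected winning probability of strategy `(x, a)` (`true` = switch,
`false` = match) under prior `p` and transition probabilities `q`. -/
def ExpWin {D : Type*} [Fintype D] [DecidableEq D]
    (x : D) (a : D → Bool) (p : D → ℝ) (q : D → D → ℝ) : ℝ :=
  p x * ∑ y ∈ Finset.univ.filter (· ≠ x), q x y * (if a y = false then 1 else 0)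
    + ∑ θ ∈ Finset.univ.filter (· ≠ x), p θ * (if a θ = true then 1 else 0)

/-! Against the uniform prior every door other than `x` contributes at most `1/n`: either it is
switched to (and wins with probability `1/n`), or it is matched and contributes `1/n` times the
probability `q x y ≤ 1` that it is revealed. Against the always-switching player, door `x` wins
exactly when the prize is elsewhere, with probability `1 - p x`, and these average to
`(n - 1)/n` over `x`. -/

section

variable {D : Type*} [Fintype D]

theorem IsTransKernel.le_one {q : D → D → ℝ} (hq : IsTransKernel q) (θ y : D) : q θ y ≤ 1 :=
  hq.2.2 θ ▸ single_le_sum (fun z _ => hq.1 θ z) (mem_univ y)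

variable [DecidableEq D]

theorem expWin_always_switch (x : D) (p : D → ℝ) (q : D → D → ℝ) :
    ExpWin x (fun _ => true) p q = ∑ θ, p θ - p x := by
  simp [ExpWin, filter_ne', sum_erase_eq_sub]

theorem expWin_const_prior (x : D) (a : D → Bool) (c : ℝ) (q : D → D → ℝ) :
    ExpWin x a (fun _ => c) q =
      c * ∑ y ∈ univ.erase x, (q x y * (if a y = false then 1 else 0) + if a y then 1 else 0) := by
  simp only [ExpWin, filter_ne', mul_add, sum_add_distrib, mul_sum]

theorem expWin_const_prior_le {q : D → D → ℝ} (hq : IsTransKernel q) (x : D) (a : D → Bool)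
    {c : ℝ} (hc : 0 ≤ c) :
    ExpWin x a (fun _ => c) q ≤ c * (Fintype.card D - 1) := by
  have door_le_one : ∀ y,
      q x y * (if a y = false then 1 else 0) + (if a y then 1 else 0) ≤ (1 : ℝ) := by
    intro y
    cases a y <;> simp [hq.le_one x y]
  rw [expWin_const_prior]
  gcongr
  calc _ ≤ ∑ _y ∈ univ.erase x, (1 : ℝ) := sum_le_sum fun y _ => door_le_one y
    _ = Fintype.card D - 1 := by
      rw [sum_const, card_erase_of_mem (mem_univ x), card_univ, nsmul_one,
        Nat.cast_sub (Fintype.card_pos_iff.mpr ⟨x⟩), Nat.cast_one]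

end

theorem saddle_point_general {D : Type*} [Fintype D] [DecidableEq D] :
    (∀ (x : D) (a : D → Bool) (q : D → D → ℝ), IsTransKernel q →
      ExpWin x a (fun _ => 1 / (Fintype.card D : ℝ)) q ≤
        ((Fintype.card D : ℝ) - 1) / (Fintype.card D : ℝ)) ∧
    (∀ (p : D → ℝ) (q : D → D → ℝ), IsPrior p → IsTransKernel q →
      (1 / (Fintype.card D : ℝ)) * ∑ x : D, ExpWin x (fun _ => true) p q =
        ((Fintype.card D : ℝ) - 1) / (Fintype.card D : ℝ)) := by
  constructor
  · intro x a q hq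
    calc _ ≤ 1 / (Fintype.card D : ℝ) * (Fintype.card D - 1) :=
          expWin_const_prior_le hq x a (by positivity)
      _ = _ := by ring
  · intro p q hp _
    simp only [expWin_always_switch, hp.2, sum_sub_distrib, sum_const, card_univ, nsmul_one]
    ring

/-- The uniform prior together with the uniformly mixed
always-switching strategy form a saddle point of the zero-sum game, whose
value is `(n-1)/n`. -/
theorem saddle_point {D : Type*} [Fintype D] [DecidableEq D]
    (hD : 3 ≤ Fintype.card D) :
    (∀ (x : D) (a : D → Bool) (q : D → D → ℝ), IsTransKernel q →
      ExpWin x a (fun _ => 1 / (Fintype.card D : ℝ)) q ≤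
        ((Fintype.card D : ℝ) - 1) / (Fintype.card D : ℝ)) ∧
    (∀ (p : D → ℝ) (q : D → D → ℝ), IsPrior p → IsTransKernel q →
      (1 / (Fintype.card D : ℝ)) * ∑ x : D, ExpWin x (fun _ => true) p q =
        ((Fintype.card D : ℝ) - 1) / (Fintype.card D : ℝ)) :=
  saddle_point_general
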